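/- arXiv:2403.13416 — 3 statements merged into one kernel-verified Lean document; each statement's English description precedes it below -/
import Mathlib

section
/- Let (Z, ρ, R) and (X, μ, T) be σ-finite measure-preserving invertible dynamical systems on standard Borel spaces, and let π: Z → X be a factor map (i.e. π pushes ρ to μ and π ∘ R = T ∘ π ρ-almost surely). Then R is conservative with respect to ρ if and only if T is conservative with respect to μ. -/
open MeasureTheory Set ENNReal Filter

set_option linter.unusedSectionVars false
section Helpers
variable {α : Type*} [MeasurableSpace α]

lemma perm_zpow_succ_apply (σ : Equiv.Perm α) (n : ℤ) (x : α) :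
    (σ ^ (n + 1)) x = σ ((σ ^ n) x) := by
  rw [add_comm, zpow_add, zpow_one]; rfl

lemma perm_zpow_pred_apply (σ : Equiv.Perm α) (n : ℤ) (x : α) :
    (σ ^ (n - 1)) x = σ.symm ((σ ^ n) x) := by
  have : n - 1 = -1 + n := by ring
  rw [this, zpow_add, zpow_neg_one]; rfl

lemma measurePreserving_perm_zpow (R : Equiv.Perm α) {μ : Measure α}
    (hR : MeasurePreserving R μ μ) (hRinv : MeasurePreserving R.symm μ μ) :
    ∀ n : ℤ, MeasurePreserving (⇑(R ^ n)) μ μ := by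
  intro n
  cases n with
  | ofNat k =>
      have : ⇑(R ^ (Int.ofNat k)) = (⇑R)^[k] := by
        rw [Int.ofNat_eq_coe, zpow_natCast, ← Equiv.Perm.iterate_eq_pow]
      rw [this]; exact hR.iterate k
  | negSucc k =>
      have : ⇑(R ^ (Int.negSucc k)) = (⇑R.symm)^[k + 1] := by
        rw [zpow_negSucc, ← inv_pow, ← Equiv.Perm.iterate_eq_pow, ← Equiv.Perm.inv_def]
      rw [this]; exact hRinv.iterate (k + 1)

lemma perm_zpow_preimage (σ : Equiv.Perm α) (n : ℤ) (s : Set α) :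
    ⇑(σ ^ n) ⁻¹' s = ⇑(σ ^ (-n)) '' s := by
  rw [Equiv.image_eq_preimage_symm]
  have : (σ ^ (-n)).symm = σ ^ n := by
    rw [← Equiv.Perm.inv_def, zpow_neg, inv_inv]
  rw [this]

lemma perm_pow_image (σ : Equiv.Perm α) (n : ℕ) (s : Set α) :
    (⇑σ)^[n] '' s = (⇑σ.symm)^[n] ⁻¹' s := by
  rw [Equiv.Perm.iterate_eq_pow, Equiv.image_eq_preimage_symm]
  have : (σ ^ n).symm = (σ.symm) ^ n := by
    rw [← Equiv.Perm.inv_def, ← Equiv.Perm.inv_def, inv_pow]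
  rw [this, Equiv.Perm.iterate_eq_pow]

lemma wandering_of_no_return (σ : Equiv.Perm α) (s : Set α)
    (h : ∀ x ∈ s, ∀ k : ℕ, k ≠ 0 → (⇑σ)^[k] x ∉ s) :
    Pairwise fun n m : ℤ => Disjoint (⇑(σ ^ n) '' s) (⇑(σ ^ m) '' s) := by
  have key : ∀ n m : ℤ, m < n → Disjoint (⇑(σ ^ n) '' s) (⇑(σ ^ m) '' s) := by
    intro n m hmn
    rw [Set.disjoint_left]
    rintro a ⟨x, hx, rfl⟩ ⟨y, hy, hxy⟩
    have hyx : y = (σ ^ (n - m)) x := by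
      have := congrArg (⇑(σ ^ (-m))) hxy
      simp only [← Equiv.Perm.mul_apply, ← zpow_add] at this
      rw [neg_add_cancel, zpow_zero] at this
      simpa [sub_eq_neg_add] using this
    set k := (n - m).toNat with hk
    have hkk : (k : ℤ) = n - m := Int.toNat_of_nonneg (by omega)
    have : y = (⇑σ)^[k] x := by
      rw [Equiv.Perm.iterate_eq_pow, hyx, ← hkk, zpow_natCast]
    exact h x hx k (by omega) (this ▸ hy)
  intro n m hnm
  rcases hnm.lt_or_gt with hlt | hlt
  · exact (key m n hlt).symm
  · exact key n m hlt

end Helpers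

/-- A measure-preserving invertible transformation (given as a bijection) is
*conservative* if there is no measurable set of positive measure whose iterates
`T^n A`, `n ∈ ℤ`, are pairwise disjoint. -/
def IsConservativeEquiv {α : Type*} [MeasurableSpace α] (T : Equiv.Perm α) (μ : Measure α) :
    Prop :=
  ¬ ∃ A : Set α, MeasurableSet A ∧ 0 < μ A ∧
      Pairwise fun n m : ℤ => Disjoint ((T ^ n) '' A) ((T ^ m) '' A)

/-- If `π : (Z, ρ, R) → (X, μ, T)` is a factor map between σ-finite invertible
measure-preserving systems on standard Borel spaces, then `R` is conservative iff `T` is. -/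
theorem conservative_iff_of_factor
    {Z X : Type*} [MeasurableSpace Z] [StandardBorelSpace Z]
    [MeasurableSpace X] [StandardBorelSpace X]
    (ρ : Measure Z) (μ : Measure X) [SigmaFinite ρ] [SigmaFinite μ]
    (R : Equiv.Perm Z) (T : Equiv.Perm X)
    (hR : MeasurePreserving R ρ ρ) (hRinv : MeasurePreserving R.symm ρ ρ)
    (hT : MeasurePreserving T μ μ) (hTinv : MeasurePreserving T.symm μ μ)
    (π : Z → X) (hπ : Measurable π) (hπρ : Measure.map π ρ = μ)
    (hfac : ∀ᵐ z ∂ρ, π (R z) = T (π z)) :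
    IsConservativeEquiv R ρ ↔ IsConservativeEquiv T μ := by
  have hRz : ∀ n : ℤ, MeasurePreserving (⇑(R ^ n)) ρ ρ := measurePreserving_perm_zpow R hR hRinv
  have hTz : ∀ n : ℤ, MeasurePreserving (⇑(T ^ n)) μ μ := measurePreserving_perm_zpow T hT hTinv
  have hρπ : ∀ A : Set X, MeasurableSet A → ρ (π ⁻¹' A) = μ A := by
    intro A hA; rw [← hπρ, Measure.map_apply hπ hA]
  -- the bad set where equivariance fails, saturated under the `R`-action
  set N₀ : Set Z := toMeasurable ρ {z | π (R z) ≠ T (π z)} with hN₀def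
  have hN₀m : MeasurableSet N₀ := measurableSet_toMeasurable _ _
  have hN₀0 : ρ N₀ = 0 := by
    rw [hN₀def, measure_toMeasurable]
    exact hfac
  set N' : Set Z := ⋃ n : ℤ, ⇑(R ^ n) ⁻¹' N₀ with hN'def
  have hN'm : MeasurableSet N' := MeasurableSet.iUnion fun n => (hRz n).measurable hN₀m
  have hN'0 : ρ N' = 0 := by
    refine measure_iUnion_null fun n => ?_
    rw [(hRz n).measure_preimage hN₀m.nullMeasurableSet]
    exact hN₀0
  have hkey : ∀ z ∉ N', ∀ n : ℤ, π ((R ^ n) z) = (T ^ n) (π z) := by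
    intro z hz
    have hz' : ∀ m : ℤ, π (R ((R ^ m) z)) = T (π ((R ^ m) z)) := by
      intro m
      have h1 : (R ^ m) z ∉ N₀ := fun h => hz (mem_iUnion.2 ⟨m, h⟩)
      have h2 : (R ^ m) z ∉ {z | π (R z) ≠ T (π z)} :=
        fun h => h1 (subset_toMeasurable _ _ h)
      simpa using h2
    intro n
    induction n using Int.induction_on with
    | zero => simp
    | succ i ih =>
        rw [perm_zpow_succ_apply R, hz' i, ih, perm_zpow_succ_apply T]
    | pred i ih =>
        have h2 : R ((R ^ (-(i : ℤ) - 1)) z) = (R ^ (-(i : ℤ))) z := by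
          rw [perm_zpow_pred_apply R, Equiv.apply_symm_apply]
        have h3 := hz' (-(i : ℤ) - 1)
        rw [h2, ih] at h3
        rw [perm_zpow_pred_apply T, h3, Equiv.symm_apply_apply]
  constructor
  · -- R conservative → T conservative
    intro hRc
    rintro ⟨A, hAm, hA0, hAd⟩
    refine hRc ⟨π ⁻¹' A \ N', (hπ hAm).diff hN'm, ?_, ?_⟩
    · rw [measure_diff_null hN'0, hρπ A hAm]; exact hA0
    · intro n m hnm
      rw [Set.disjoint_left]
      rintro z ⟨x, hx, rfl⟩ ⟨y, hy, hyz⟩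
      rcases hx with ⟨hxA, hxN⟩
      rcases hy with ⟨hyA, hyN⟩
      exact Set.disjoint_left.mp (hAd hnm) ⟨π x, hxA, (hkey x hxN n).symm⟩
        ⟨π y, hyA, by rw [← hkey y hyN m, hyz]⟩
  · -- T conservative → R conservative
    intro hTc
    rintro ⟨B, hBm, hB0, hBd⟩
    -- mathlib conservativity for T
    have hTcons : Conservative (⇑T) μ := by
      refine ⟨hT.quasiMeasurePreserving, ?_⟩
      intro s hsm hs0
      by_contra hcon
      push_neg at hcon
      exact hTc ⟨s, hsm, pos_iff_ne_zero.mpr hs0,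
        wandering_of_no_return T s fun x hx k hk => hcon x hx k hk⟩
    -- shrink B to have finite measure and project into a finite-measure set
    obtain ⟨k, hk⟩ : ∃ k, ρ ((B \ N') ∩ π ⁻¹' (spanningSets μ k)) ≠ 0 := by
      by_contra hall
      push_neg at hall
      have h0 : ρ (⋃ k, (B \ N') ∩ π ⁻¹' (spanningSets μ k)) = 0 := measure_iUnion_null hall
      rw [← Set.inter_iUnion, ← Set.preimage_iUnion, iUnion_spanningSets, preimage_univ,
        inter_univ, measure_diff_null hN'0] at h0
      exact hB0.ne' h0
    set C : Set X := spanningSets μ k with hCdef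
    have hCm : MeasurableSet C := measurableSet_spanningSets μ k
    set B' : Set Z := (B \ N') ∩ π ⁻¹' C with hB'def
    have hB'm : MeasurableSet B' := (hBm.diff hN'm).inter (hπ hCm)
    have hB'B : B' ⊆ B := fun z hz => hz.1.1
    have hB'N : ∀ z ∈ B', z ∉ N' := fun z hz => hz.1.2
    have hB'fin : ρ B' < ∞ := by
      refine lt_of_le_of_lt (measure_mono inter_subset_right) ?_
      rw [hρπ C hCm]
      exact measure_spanningSets_lt_top μ k
    -- the projected measure
    set lam : Measure X := Measure.map π (ρ.restrict B') with hlamdef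
    have hlam_apply : ∀ A : Set X, MeasurableSet A → lam A = ρ (π ⁻¹' A ∩ B') := by
      intro A hA
      rw [hlamdef, Measure.map_apply hπ hA, Measure.restrict_apply (hπ hA)]
    have hlamfin : IsFiniteMeasure lam := by
      constructor
      rw [hlam_apply univ MeasurableSet.univ, preimage_univ, univ_inter]
      exact hB'fin
    have hac : lam ≪ μ := by
      refine Measure.AbsolutelyContinuous.mk fun A hA hA0 => ?_
      rw [hlam_apply A hA]
      refine measure_mono_null inter_subset_left ?_
      rw [hρπ A hA]; exact hA0
    set h : X → ℝ≥0∞ := lam.rnDeriv μ with hhdef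
    have hhm : Measurable h := Measure.measurable_rnDeriv _ _
    have hlam_eq : ∀ A : Set X, MeasurableSet A → lam A = ∫⁻ x in A, h x ∂μ := by
      intro A hA
      conv_lhs => rw [← Measure.withDensity_rnDeriv_eq lam μ hac]
      rw [withDensity_apply _ hA]
    -- the image sets `T^[n] '' A` and their measures
    have hTit : ∀ n : ℕ, MeasurePreserving ((⇑T)^[n]) μ μ := fun n => hT.iterate n
    have hTim : ∀ (n : ℕ) (A : Set X), MeasurableSet A → MeasurableSet ((⇑T)^[n] '' A) := by
      intro n A hA
      rw [perm_pow_image]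
      exact (hTinv.measurable.iterate n) hA
    have step_c : ∀ (n : ℕ) (A : Set X), MeasurableSet A →
        ∫⁻ x in A, h ((⇑T)^[n] x) ∂μ = lam ((⇑T)^[n] '' A) := by
      intro n A hA
      have himg := hTim n A hA
      have hsl := setLIntegral_map (μ := μ) himg hhm (hTit n).measurable
      rw [(hTit n).map_eq, Set.preimage_image_eq A] at hsl
      · rw [hlam_eq _ himg]; exact hsl.symm
      · rw [Equiv.Perm.iterate_eq_pow]; exact (T ^ n).injective
    -- transfer to Z
    have step_a : ∀ (n : ℕ) (A : Set X), MeasurableSet A →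
        lam ((⇑T)^[n] '' A) = ρ (⇑(R ^ (n : ℤ)) ⁻¹' B' ∩ π ⁻¹' A) := by
      intro n A hA
      rw [hlam_apply _ (hTim n A hA)]
      have hseteq : π ⁻¹' ((⇑T)^[n] '' A) ∩ B' = ⇑(R ^ (-(n : ℤ))) ⁻¹' (π ⁻¹' A) ∩ B' := by
        ext z
        simp only [mem_inter_iff, mem_preimage, and_congr_left_iff]
        intro hzB'
        rw [perm_pow_image]
        have hTsymm : (⇑T.symm)^[n] (π z) = (T ^ (-(n : ℤ))) (π z) := by
          rw [Equiv.Perm.iterate_eq_pow, zpow_neg, zpow_natCast, ← Equiv.Perm.inv_def, inv_pow]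
        rw [mem_preimage, hTsymm, ← hkey z (hB'N z hzB') (-(n : ℤ))]
      rw [hseteq]
      have hinj : Function.Injective (⇑(R ^ (-(n : ℤ)))) := (R ^ (-(n : ℤ))).injective
      have h2 : ⇑(R ^ (-(n : ℤ))) ⁻¹' (π ⁻¹' A) ∩ B'
          = ⇑(R ^ (-(n : ℤ))) ⁻¹' (π ⁻¹' A ∩ ⇑(R ^ (-(n : ℤ))) '' B') := by
        rw [preimage_inter, Set.preimage_image_eq B' hinj]
      rw [h2, (hRz (-(n : ℤ))).measure_preimage, ← perm_zpow_preimage R (n : ℤ) B',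
        inter_comm]
      refine (((hπ hA).inter ?_).nullMeasurableSet)
      rw [← perm_zpow_preimage R (n : ℤ) B']
      exact (hRz (n : ℤ)).measurable hB'm
    -- disjointness of the preimages of B'
    have hdisj : Pairwise fun n m : ℕ =>
        Disjoint (⇑(R ^ (n : ℤ)) ⁻¹' B') (⇑(R ^ (m : ℤ)) ⁻¹' B') := by
      intro n m hnm
      have hsub : ∀ j : ℕ, ⇑(R ^ (j : ℤ)) ⁻¹' B' ⊆ ⇑(R ^ (-(j : ℤ))) '' B := by
        intro j
        rw [← perm_zpow_preimage]
        exact preimage_mono hB'B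
      exact Disjoint.mono (hsub n) (hsub m)
        (hBd (show -(n : ℤ) ≠ -(m : ℤ) by omega))
    -- the summed inequality
    have hsum : ∀ A : Set X, MeasurableSet A →
        ∑' n : ℕ, ρ (⇑(R ^ (n : ℤ)) ⁻¹' B' ∩ π ⁻¹' A) ≤ μ A := by
      intro A hA
      rw [← measure_iUnion
        (fun n m hnm => ((hdisj hnm).mono inter_subset_left inter_subset_left))
        (fun n => ((hRz (n : ℤ)).measurable hB'm).inter (hπ hA))]
      refine le_trans (measure_mono (iUnion_subset fun n => inter_subset_right)) ?_
      rw [hρπ A hA]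
    -- the density bound
    have hbound : (fun x => ∑' n : ℕ, h ((⇑T)^[n] x)) ≤ᵐ[μ] fun _ => (1 : ℝ≥0∞) := by
      refine ae_le_of_forall_setLIntegral_le_of_sigmaFinite
        (Measurable.ennreal_tsum fun n => hhm.comp (hTit n).measurable) ?_
      intro s hs _
      rw [lintegral_tsum (f := fun (n : ℕ) (x : X) => h ((⇑T)^[n] x))
        fun n => (hhm.comp (hTit n).measurable).aemeasurable]
      calc ∑' n : ℕ, ∫⁻ x in s, h ((⇑T)^[n] x) ∂μ
          = ∑' n : ℕ, ρ (⇑(R ^ (n : ℤ)) ⁻¹' B' ∩ π ⁻¹' s) := by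
            refine tsum_congr fun n => ?_
            rw [step_c n s hs, step_a n s hs]
        _ ≤ μ s := hsum s hs
        _ = ∫⁻ _ in s, (1 : ℝ≥0∞) ∂μ := (setLIntegral_one s).symm
    -- positivity of the density
    have hint : ∫⁻ x, h x ∂μ = ρ B' := by
      rw [← setLIntegral_univ, ← hlam_eq univ MeasurableSet.univ,
        hlam_apply univ MeasurableSet.univ, preimage_univ, univ_inter]
    obtain ⟨j, hj⟩ : ∃ j : ℕ, μ {x | ((j : ℝ≥0∞) + 1)⁻¹ ≤ h x} ≠ 0 := by
      by_contra hall
      push_neg at hall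
      have hsub : {x | h x ≠ 0} ⊆ ⋃ j : ℕ, {x | ((j : ℝ≥0∞) + 1)⁻¹ ≤ h x} := by
        intro x hx
        obtain ⟨n, hn⟩ := ENNReal.exists_inv_nat_lt hx
        refine mem_iUnion.2 ⟨n, ?_⟩
        exact le_trans (ENNReal.inv_le_inv.mpr le_self_add) hn.le
      have h0 : μ {x | h x ≠ 0} = 0 :=
        measure_mono_null hsub (measure_iUnion_null hall)
      have : h =ᵐ[μ] 0 := by
        rw [Filter.EventuallyEq, ae_iff]
        simpa using h0
      have : ∫⁻ x, h x ∂μ = 0 := (lintegral_eq_zero_iff hhm).2 this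
      rw [hint] at this
      exact hk this
    set ε : ℝ≥0∞ := ((j : ℝ≥0∞) + 1)⁻¹ with hεdef
    have hε0 : ε ≠ 0 := by
      rw [hεdef]
      exact ENNReal.inv_ne_zero.mpr (by simp)
    set D : Set X := {x | ε ≤ h x} with hDdef
    have hDm : MeasurableSet D := measurableSet_le measurable_const hhm
    have hrec := hTcons.ae_mem_imp_frequently_image_mem hDm.nullMeasurableSet
    have hnoD : ∀ᵐ x ∂μ, x ∉ D := by
      filter_upwards [hrec, hbound] with x hx hgx
      intro hxD
      have hinf : {n : ℕ | (⇑T)^[n] x ∈ D}.Infinite :=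
        Nat.frequently_atTop_iff_infinite.mp (hx hxD)
      have hti := hinf.to_subtype
      have htop : (⊤ : ℝ≥0∞) ≤ ∑' n : ℕ, h ((⇑T)^[n] x) := by
        calc (⊤ : ℝ≥0∞) = ∑' _ : {n : ℕ | (⇑T)^[n] x ∈ D}, ε :=
              (ENNReal.tsum_const_eq_top_of_ne_zero hε0).symm
          _ ≤ ∑' n : {n : ℕ | (⇑T)^[n] x ∈ D}, h ((⇑T)^[(n : ℕ)] x) :=
              ENNReal.tsum_le_tsum fun n => n.2
          _ ≤ ∑' n : ℕ, h ((⇑T)^[n] x) :=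
              ENNReal.tsum_comp_le_tsum_of_injective Subtype.val_injective
                (fun n => h ((⇑T)^[n] x))
      have : (⊤ : ℝ≥0∞) ≤ 1 := le_trans htop hgx
      simp at this
    have hD0 : μ D = 0 := by
      have h0 := ae_iff.mp hnoD
      simpa [not_not] using h0
    exact hj hD0
end

section
/- Let (X, μ, T) be conservative and let ν be a probability measure on Y preserved by S. Then the product transformation T × S on (X × Y, μ ⊗ ν) is conservative. -/
/-!
If `s ⊆ α × β` has positive `μ ⊗ ν`-measure, its vertical sections have `ν`-measure `> ε` over a
set `B` of positive `μ`-measure, and by Poincaré recurrence some `x ∈ B` returns to `B` infinitely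
often. Pulling the sections over `f^[n] x` back by `g^[n]` gives sets of measure `> ε`; once
`N ε > ν univ`, two of them, for times `i < j`, meet at some `y`, and `(f^[i] x, g^[i] y) ∈ s`
returns to `s` after `j - i` steps. For a permutation, having no wandering set of positive measure
is the same as being `MeasureTheory.Conservative`.
-/

open MeasureTheory

open Filter Function Set
open scoped ENNReal

namespace MeasureTheory

theorem exists_mem_iterate_prodMap_mem_of_ne {α β : Type*} {f : α → α} {g : β → β}
    {s : Set (α × β)} {x : α} {y : β} {i j : ℕ} (hij : i ≠ j) (hi : (f^[i] x, g^[i] y) ∈ s)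
    (hj : (f^[j] x, g^[j] y) ∈ s) : ∃ p ∈ s, ∃ m ≠ 0, (Prod.map f g)^[m] p ∈ s := by
  wlog hlt : i < j generalizing i j
  · exact this hij.symm hj hi (by omega)
  refine ⟨_, hi, j - i, by omega, ?_⟩
  rwa [Prod.map_iterate, Prod.map_apply, ← iterate_add_apply, ← iterate_add_apply,
    Nat.sub_add_cancel hlt.le]

variable {α β : Type*} [MeasurableSpace α] [MeasurableSpace β] {μ : Measure α} {ν : Measure β}

theorem exists_measure_setOf_lt_ne_zero_of_lintegral_ne_zero {F : α → ℝ≥0∞}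
    (hF : ∫⁻ x, F x ∂μ ≠ 0) : ∃ ε ≠ 0, μ {x | ε < F x} ≠ 0 := by
  by_contra! h
  have hnull (n : ℕ) : ∀ᵐ x ∂μ, ¬ (n : ℝ≥0∞)⁻¹ < F x :=
    measure_eq_zero_iff_ae_notMem.1 <| h _ (ENNReal.inv_ne_zero.2 (ENNReal.natCast_ne_top n))
  have hF0 : F =ᵐ[μ] 0 := by
    filter_upwards [ae_all_iff.2 hnull] with x hx
    by_contra hx0
    obtain ⟨n, hn⟩ := ENNReal.exists_inv_nat_lt hx0
    exact hx n hn
  exact hF ((lintegral_congr_ae hF0).trans lintegral_zero)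

theorem exists_mem_iterate_prodMap_mem_of_frequently [IsFiniteMeasure ν] {f : α → α} {g : β → β}
    (hg : MeasurePreserving g ν ν) {s : Set (α × β)} (hs : MeasurableSet s) {x : α} {ε : ℝ≥0∞}
    (hε : ε ≠ 0) (hx : ∃ᶠ n in atTop, ε < ν (Prod.mk (f^[n] x) ⁻¹' s)) :
    ∃ p ∈ s, ∃ m ≠ 0, (Prod.map f g)^[m] p ∈ s := by
  obtain ⟨N, hN⟩ := ENNReal.exists_nat_mul_gt hε (measure_ne_top ν univ)
  obtain ⟨F, hF, hcard⟩ := (Nat.frequently_atTop_iff_infinite.1 hx).exists_subset_card_eq N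
  set D : ℕ → Set β := fun n ↦ g^[n] ⁻¹' (Prod.mk (f^[n] x) ⁻¹' s)
  have hD (n : ℕ) : ν (D n) = ν (Prod.mk (f^[n] x) ⁻¹' s) :=
    (hg.iterate n).measure_preimage (measurable_prodMk_left hs).nullMeasurableSet
  have hsum : ν univ < ∑ n ∈ F, ν (D n) := calc
    ν univ < N * ε := hN
    _ = ∑ _n ∈ F, ε := by rw [Finset.sum_const, hcard, nsmul_eq_mul]
    _ ≤ ∑ n ∈ F, ν (D n) := Finset.sum_le_sum fun n hn ↦ (hD n).symm ▸ (hF hn).le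
  obtain ⟨i, -, j, -, hij, y, hyi, hyj⟩ := exists_nonempty_inter_of_measure_univ_lt_sum_measure ν
    (fun n _ ↦ ((hg.iterate n).measurable (measurable_prodMk_left hs)).nullMeasurableSet) hsum
  exact exists_mem_iterate_prodMap_mem_of_ne hij hyi hyj

theorem Conservative.prodMap [SFinite μ] [IsFiniteMeasure ν] {f : α → α} {g : β → β}
    (hf : Conservative f μ) (hg : MeasurePreserving g ν ν) :
    Conservative (Prod.map f g) (μ.prod ν) := by
  refine ⟨QuasiMeasurePreserving.prodMap hf.toQuasiMeasurePreserving hg.quasiMeasurePreserving,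
    fun s hs hs0 ↦ ?_⟩
  rw [Measure.prod_apply hs] at hs0
  obtain ⟨ε, hε, hB⟩ := exists_measure_setOf_lt_ne_zero_of_lintegral_ne_zero hs0
  have hBm : MeasurableSet {x | ε < ν (Prod.mk x ⁻¹' s)} :=
    measurableSet_lt measurable_const (measurable_measure_prodMk_left hs)
  obtain ⟨x, -, hx⟩ :=
    (hf.frequently_ae_mem_and_frequently_image_mem hBm.nullMeasurableSet hB).exists
  exact exists_mem_iterate_prodMap_mem_of_frequently hg hs hε hx

end MeasureTheory

section

variable {α : Type*} [MeasurableSpace α] {μ : Measure α} {T : Equiv.Perm α}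

theorem IsConservativeEquiv.conservative (hT : Measure.QuasiMeasurePreserving T μ μ)
    (h : IsConservativeEquiv T μ) : Conservative T μ := by
  refine ⟨hT, fun s hs hs0 ↦ ?_⟩
  by_contra! hret
  refine h ⟨s, hs, pos_iff_ne_zero.2 hs0, (pairwise_disjoint_on _).2 fun n m hnm ↦ ?_⟩
  obtain ⟨k, rfl⟩ := Int.le.dest hnm.le
  rw [zpow_add, Equiv.Perm.coe_mul, image_comp, disjoint_image_iff (T ^ n).injective,
    zpow_natCast]
  refine disjoint_left.2 fun _ hb ⟨x, hx, hxb⟩ ↦ hret x hx k (by omega) ?_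
  rwa [Equiv.Perm.iterate_eq_pow, hxb]

theorem MeasureTheory.Conservative.isConservativeEquiv (h : Conservative T μ) :
    IsConservativeEquiv T μ := by
  rintro ⟨A, hA, hApos, hdisj⟩
  obtain ⟨x, hx, m, hm, hmx⟩ := h.exists_mem_iterate_mem' hA hApos.ne'
  have h_image : T^[m] x ∈ (T ^ (m : ℤ)) '' A := ⟨x, hx, by rw [zpow_natCast]; rfl⟩
  have h_self : T^[m] x ∈ (T ^ (0 : ℤ)) '' A := ⟨_, hmx, by rw [zpow_zero]; rfl⟩
  exact disjoint_left.1 (hdisj (Int.natCast_ne_zero.2 hm)) h_image h_self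

end

/-- If `(X, μ, T)` is conservative with `μ` σ-finite and `S` preserves a probability
measure `ν` on `Y`, then `T × S` is conservative on `(X × Y, μ ⊗ ν)`. -/
theorem prod_conservative_of_conservative
    {X Y : Type*} [MeasurableSpace X] [MeasurableSpace Y]
    (μ : Measure X) [SigmaFinite μ] (ν : Measure Y) [IsProbabilityMeasure ν]
    (T : Equiv.Perm X) (hT : MeasurePreserving T μ μ)
    (S : Equiv.Perm Y) (hS : MeasurePreserving S ν ν)
    (hcons : IsConservativeEquiv T μ) :
    IsConservativeEquiv (Equiv.prodCongr T S) (μ.prod ν) :=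
  Conservative.isConservativeEquiv (T := Equiv.prodCongr T S)
    ((hcons.conservative hT.quasiMeasurePreserving).prodMap hS)
end

section
/- Let (X, μ, T) be a measure-preserving system whose k-fold Cartesian product T^{×k} is conservative and ergodic for every k ≥ 1 (infinite ergodic index), and suppose for some k ≥ 1 the 2k-fold product is ergodic. Then the group of L^∞-eigenvalues of the k-fold product satisfies e(T^{×k}) = e(T). -/
open MeasureTheory Filter Set

/-- The set of `L^∞`-eigenvalues of a measure-preserving system `(X, μ, T)`. -/
def linftyEigenvalues {α : Type*} [MeasurableSpace α] (T : α → α) (μ : Measure α) : Set ℂ :=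
  {c : ℂ | ∃ f : α → ℂ, MemLp f ⊤ μ ∧ (∀ᵐ x ∂μ, f x ≠ 0) ∧ ∀ᵐ x ∂μ, f (T x) = c * f x}

lemma one_mem_linftyEigenvalues {α : Type*} [MeasurableSpace α] (T : α → α) (μ : Measure α) :
    (1 : ℂ) ∈ linftyEigenvalues T μ :=
  ⟨fun _ => 1, memLp_top_const 1, by simp, by simp⟩

lemma linftyEigenvalues_zero {α : Type*} [MeasurableSpace α] (T : α → α) :
    linftyEigenvalues T (0 : Measure α) = Set.univ := by
  ext c
  refine ⟨fun _ => trivial, fun _ => ⟨fun _ => 1, memLp_top_const 1, ?_, ?_⟩⟩ <;>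
    simp [ae_zero]

lemma norm_eq_one_of_eigen {α : Type*} [MeasurableSpace α] {S : α → α} {ν : Measure α}
    (hν : ν ≠ 0) (hS : MeasurePreserving S ν ν) {c : ℂ} {F : α → ℂ} (hF : MemLp F ⊤ ν)
    (hF0 : ∀ᵐ x ∂ν, F x ≠ 0) (heig : ∀ᵐ x ∂ν, F (S x) = c * F x) : ‖c‖ = 1 := by
  have hne : (ae ν).NeBot := ae_neBot.2 hν
  have hN0 : eLpNorm F ⊤ ν ≠ 0 := by
    intro h
    have h0 : F =ᵐ[ν] 0 := (eLpNorm_eq_zero_iff hF.1 (by simp)).1 h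
    obtain ⟨x, hx1, hx2⟩ := (hF0.and h0).exists
    exact hx1 hx2
  have hNt : eLpNorm F ⊤ ν ≠ ⊤ := hF.2.ne
  have h1 : eLpNorm (F ∘ S) ⊤ ν = eLpNorm F ⊤ ν :=
    eLpNorm_comp_measurePreserving hF.1 hS
  have h2 : eLpNorm (F ∘ S) ⊤ ν = eLpNorm (c • F) ⊤ ν := by
    refine eLpNorm_congr_ae ?_
    filter_upwards [heig] with x hx
    simpa using hx
  rw [h2, eLpNorm_const_smul] at h1
  have hc1 : (‖c‖₊ : ENNReal) = 1 := by
    have h3 : (‖c‖₊ : ENNReal) * eLpNorm F ⊤ ν = 1 * eLpNorm F ⊤ ν := by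
      rw [one_mul]; exact h1
    exact (ENNReal.mul_left_inj hN0 hNt).1 h3
  have hc2 : ‖c‖₊ = 1 := by exact_mod_cast hc1
  rw [← coe_nnnorm, hc2, NNReal.coe_one]

lemma linftyEigenvalues_eq_one {α : Type*} [MeasurableSpace α] {S : α → α} {ν : Measure α}
    [SigmaFinite ν] (hν : ν ≠ 0) (hS : MeasurePreserving S ν ν)
    (herg : Ergodic (fun p : α × α => (S p.1, S p.2)) (ν.prod ν)) :
    linftyEigenvalues S ν = {1} := by
  have hne : (ae ν).NeBot := ae_neBot.2 hν
  ext c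
  simp only [Set.mem_singleton_iff]
  constructor
  · rintro ⟨F, hF, hF0, heig⟩
    have hc : ‖c‖ = 1 := norm_eq_one_of_eigen hν hS hF hF0 heig
    have hcc : c * (starRingEnd ℂ) c = 1 := by
      have hsq : Complex.normSq c = 1 := by
        rw [Complex.normSq_eq_norm_sq, hc, one_pow]
      rw [Complex.mul_conj, hsq, Complex.ofReal_one]
    set G : α × α → ℂ := fun p => F p.1 * (starRingEnd ℂ) (F p.2) with hGdef
    have hqf : Measure.QuasiMeasurePreserving (Prod.fst : α × α → α) (ν.prod ν) ν :=
      Measure.quasiMeasurePreserving_fst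
    have hqs : Measure.QuasiMeasurePreserving (Prod.snd : α × α → α) (ν.prod ν) ν :=
      Measure.quasiMeasurePreserving_snd
    have hGm : AEStronglyMeasurable G (ν.prod ν) :=
      (hF.1.comp_quasiMeasurePreserving hqf).mul
        ((Complex.continuous_conj.comp_aestronglyMeasurable hF.1).comp_quasiMeasurePreserving hqs)
    have hGeq : (G ∘ fun p : α × α => (S p.1, S p.2)) =ᵐ[ν.prod ν] G := by
      filter_upwards [hqf.ae heig, hqs.ae heig] with p h1 h2
      simp only [Function.comp_apply, hGdef, h1, h2, map_mul]
      linear_combination F p.1 * (starRingEnd ℂ) (F p.2) * hcc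
    obtain ⟨A, hA⟩ := herg.ae_eq_const_of_ae_eq_comp_ae hGm hGeq
    have hprodne : (ae (ν.prod ν)).NeBot := by
      refine ae_neBot.2 ?_
      intro h
      have : (ν.prod ν) Set.univ = 0 := by rw [h]; simp
      rw [← Set.univ_prod_univ, Measure.prod_prod] at this
      rcases mul_eq_zero.1 this with h' | h' <;>
        exact hν (Measure.measure_univ_eq_zero.1 h')
    have hGne : ∀ᵐ p ∂ν.prod ν, G p ≠ 0 := by
      filter_upwards [hqf.ae hF0, hqs.ae hF0] with p h1 h2
      exact mul_ne_zero h1 (by simpa using h2)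
    have hAne : A ≠ 0 := by
      obtain ⟨p, h1, h2⟩ := (hGne.and hA).exists
      rw [h2] at h1
      exact h1
    have hxy : ∀ᵐ x ∂ν, ∀ᵐ y ∂ν, F x * (starRingEnd ℂ) (F y) = A :=
      Measure.ae_ae_of_ae_prod hA
    obtain ⟨x₀, hx0, hx1⟩ := (hF0.and hxy).exists
    have hFconst : ∀ᵐ y ∂ν, F y = (starRingEnd ℂ) (A / F x₀) := by
      filter_upwards [hx1] with y hy
      have : (starRingEnd ℂ) (F y) = A / F x₀ := by
        field_simp at hy ⊢
        linear_combination hy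
      calc F y = (starRingEnd ℂ) ((starRingEnd ℂ) (F y)) := by simp
        _ = (starRingEnd ℂ) (A / F x₀) := by rw [this]
    set b : ℂ := (starRingEnd ℂ) (A / F x₀) with hbdef
    have hbne : b ≠ 0 := by
      simp [hbdef, div_eq_zero_iff, hAne, hx0]
    have hFS : ∀ᵐ y ∂ν, F (S y) = b := hS.quasiMeasurePreserving.ae hFconst
    obtain ⟨y, ⟨h1, h2⟩, h3⟩ := ((heig.and hFconst).and hFS).exists
    -- h1 : F (S y) = c * F y, h2 : F y = b, h3 : F (S y) = b
    rw [h3, h2] at h1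
    rcases mul_left_eq_self₀.1 h1.symm with h | h
    · exact h
    · exact absurd h hbne
  · rintro rfl
    exact one_mem_linftyEigenvalues S ν

lemma ergodic_of_conj {α β : Type*} [MeasurableSpace α] [MeasurableSpace β]
    (e : α ≃ᵐ β) {ν : Measure α} {ρ : Measure β} (he : MeasurePreserving e ν ρ)
    {S : α → α} {S' : β → β} (hcomm : ∀ a, e (S a) = S' (e a))
    (h : Ergodic S ν) : Ergodic S' ρ := by
  have hS'eq : S' = e ∘ S ∘ e.symm := by
    funext b
    have := hcomm (e.symm b)
    simp at this
    rw [← this]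
    simp
  constructor
  · rw [hS'eq]
    exact he.comp (h.toMeasurePreserving.comp (he.symm e))
  · constructor
    intro s hs hinv
    rw [Filter.eventuallyConst_set']
    have htm : MeasurableSet (e ⁻¹' s) := e.measurable hs
    have htinv : S ⁻¹' (e ⁻¹' s) = e ⁻¹' s := by
      ext x
      simp only [Set.mem_preimage]
      rw [hcomm x, ← Set.mem_preimage, hinv]
    rcases h.toPreErgodic.ae_empty_or_univ htm htinv with h' | h'
    · left
      rw [ae_eq_empty] at h' ⊢
      rwa [← he.measure_preimage hs.nullMeasurableSet]
    · right
      rw [ae_eq_univ] at h' ⊢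
      rw [← he.measure_preimage hs.compl.nullMeasurableSet]
      rwa [Set.preimage_compl]

/-- If `(X, μ, T)` has infinite ergodic index (all finite Cartesian powers are conservative
and ergodic) and for some `k ≥ 1` the `2k`-fold power is ergodic, then
`e(T^{×k}) = e(T)`. -/
theorem linftyEigenvalues_pow_eq
    {X : Type*} [MeasurableSpace X]
    (μ : Measure X) [SigmaFinite μ] (T : X → X) (hT : MeasurePreserving T μ μ)
    (hindex : ∀ m : ℕ, 1 ≤ m →
      Conservative (fun x : Fin m → X => fun i => T (x i)) (Measure.pi fun _ => μ) ∧
      Ergodic (fun x : Fin m → X => fun i => T (x i)) (Measure.pi fun _ => μ))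
    (k : ℕ) (hk : 1 ≤ k)
    (h2k : Ergodic (fun x : Fin (2 * k) → X => fun i => T (x i))
      (Measure.pi fun _ : Fin (2 * k) => μ)) :
    linftyEigenvalues (fun x : Fin k → X => fun i => T (x i)) (Measure.pi fun _ => μ)
      = linftyEigenvalues T μ := by
  rcases eq_or_ne μ 0 with rfl | hμ
  · have hpi : (Measure.pi fun _ : Fin k => (0 : Measure X)) = 0 := by
      rw [← Measure.measure_univ_eq_zero, ← Set.pi_univ Set.univ, Measure.pi_pi]
      simp [zero_pow (by omega : k ≠ 0)]
    rw [hpi, linftyEigenvalues_zero, linftyEigenvalues_zero]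
  · -- both sides are {1}
    have hμuniv : μ Set.univ ≠ 0 := fun h => hμ (Measure.measure_univ_eq_zero.1 h)
    -- e(T) = {1} using m = 2
    have hergT2 : Ergodic (fun p : X × X => (T p.1, T p.2)) (μ.prod μ) := by
      refine ergodic_of_conj MeasurableEquiv.finTwoArrow (measurePreserving_finTwoArrow μ)
        (S := fun x : Fin 2 → X => fun i => T (x i)) ?_ (hindex 2 (by norm_num)).2
      intro a
      rfl
    have hT1 : linftyEigenvalues T μ = {1} := linftyEigenvalues_eq_one hμ hT hergT2
    -- the k-fold product system
    set ν : Measure (Fin k → X) := Measure.pi fun _ => μ with hν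
    set S : (Fin k → X) → (Fin k → X) := fun x => fun i => T (x i) with hS
    have hνne : ν ≠ 0 := by
      intro h
      have h0 : ν Set.univ = 0 := by rw [h]; simp
      rw [hν, ← Set.pi_univ Set.univ, Measure.pi_pi, Finset.prod_const,
        Finset.card_univ, Fintype.card_fin] at h0
      exact hμuniv (pow_eq_zero_iff (by omega : k ≠ 0) |>.1 h0)
    have hSmp : MeasurePreserving S ν ν := by
      rw [hν, hS]
      exact measurePreserving_pi _ _ (fun _ => hT)
    -- build the measurable equiv (Fin (2*k) → X) ≃ᵐ (Fin k → X) × (Fin k → X)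
    let f : (Fin k ⊕ Fin k) ≃ Fin (2 * k) := finSumFinEquiv.trans (finCongr (two_mul k).symm)
    let e₁ : ((Fin k ⊕ Fin k) → X) ≃ᵐ (Fin (2 * k) → X) :=
      MeasurableEquiv.piCongrLeft (fun _ => X) f
    let e₂ : ((Fin k ⊕ Fin k) → X) ≃ᵐ (Fin k → X) × (Fin k → X) :=
      MeasurableEquiv.sumPiEquivProdPi (fun _ => X)
    let e : (Fin (2 * k) → X) ≃ᵐ (Fin k → X) × (Fin k → X) := e₁.symm.trans e₂
    have he₁ : MeasurePreserving e₁ (Measure.pi fun _ => μ) (Measure.pi fun _ => μ) :=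
      measurePreserving_piCongrLeft (fun _ => μ) f
    have he₂ : MeasurePreserving e₂ (Measure.pi fun _ => μ) (ν.prod ν) :=
      measurePreserving_sumPiEquivProdPi (fun _ => μ)
    have he : MeasurePreserving e (Measure.pi fun _ : Fin (2 * k) => μ) (ν.prod ν) := by
      have := he₂.comp (he₁.symm e₁)
      exact this
    have hcomm : ∀ x : Fin (2 * k) → X,
        e (fun i => T (x i)) = (fun p : (Fin k → X) × (Fin k → X) => (S p.1, S p.2)) (e x) := by
      intro x
      rfl
    have hergS2 : Ergodic (fun p : (Fin k → X) × (Fin k → X) => (S p.1, S p.2)) (ν.prod ν) :=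
      ergodic_of_conj e he hcomm h2k
    rw [hT1]
    exact linftyEigenvalues_eq_one hνne hSmp hergS2
end
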